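/- Let C be E_10 or B_10. A vector v ∈ 𝔽₂^40 belongs to ρ_C(C) if and only if the following three conditions hold: (i) Proj(v) ∈ C; (ii) the ten columns of the 4×10 array of v all have the same parity; (iii) the parity of the top row of the array of v is even. -/

import Mathlib

open scoped BigOperators

section Defs

variable {F : Type} [Field F] [DecidableEq F]

/-- The binary coordinate in column `j` (0-indexed), row `k`. -/
def idx (j : Fin 10) (k : Fin 4) : Fin 40 :=
  ⟨4 * j.val + k.val, by have := j.isLt; have := k.isLt; omega⟩

/-- The map φ : GF(4) → 𝔽₂⁴, 0↦0000, 1↦0011, ω↦0101, ϖ↦0110. -/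
def phi (ω : F) : F → (Fin 4 → ZMod 2) := fun x =>
  if x = 0 then ![0, 0, 0, 0]
  else if x = 1 then ![0, 0, 1, 1]
  else if x = ω then ![0, 1, 0, 1]
  else ![0, 1, 1, 0]

/-- Ĉ : the image of a quaternary code under coordinatewise φ. -/
def hatSet (ω : F) (C : Set (Fin 10 → F)) : Set (Fin 40 → ZMod 2) :=
  { v | ∃ c ∈ C, ∀ (j : Fin 10) (k : Fin 4), v (idx j k) = phi ω (c j) k }

/-- d₄¹⁰ : binary vectors of length 40 constant on each of the ten columns. -/
def d4ten : Set (Fin 40 → ZMod 2) :=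
  { v | ∀ (j : Fin 10) (k k' : Fin 4), v (idx j k) = v (idx j k') }

/-- (d₄¹⁰)₀ : the subcode of d₄¹⁰ of codewords of weight divisible by 8. -/
def d4ten0 : Set (Fin 40 → ZMod 2) :=
  { v | v ∈ d4ten ∧ 8 ∣ hammingNorm v }

/-- The generator 1000 1000 ... 1000 of e_C. -/
def eCvec : Fin 40 → ZMod 2 := fun i => if i.val % 4 = 0 then 1 else 0

/-- The generator 1000 (×9) 0111 of e_B. -/
def eBvec : Fin 40 → ZMod 2 := fun i =>
  if i.val < 36 then (if i.val % 4 = 0 then 1 else 0)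
  else (if i.val % 4 = 0 then 0 else 1)

/-- ρ_C(C) = Ĉ + (d₄¹⁰)₀ + e_C. -/
def rhoC (ω : F) (C : Set (Fin 10 → F)) : Set (Fin 40 → ZMod 2) :=
  { v | ∃ a ∈ hatSet ω C, ∃ b ∈ d4ten0,
      ∃ e ∈ ({0, eCvec} : Set (Fin 40 → ZMod 2)), v = a + b + e }

/-- ρ_B(C) = Ĉ + (d₄¹⁰)₀ + e_B. -/
def rhoB (ω : F) (C : Set (Fin 10 → F)) : Set (Fin 40 → ZMod 2) :=
  { v | ∃ a ∈ hatSet ω C, ∃ b ∈ d4ten0,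
      ∃ e ∈ ({0, eBvec} : Set (Fin 40 → ZMod 2)), v = a + b + e }

/-- The trace inner product x⋆y = Σ Tr(xᵢ ȳᵢ), computed in GF(4) (its value lies
in the prime subfield GF(2)). -/
def traceIP (x y : Fin 10 → F) : F :=
  ∑ i, ((x i * (y i) ^ 2) + (x i * (y i) ^ 2) ^ 2)

/-- The dual of an additive code with respect to the trace inner product. -/
def addDual (C : Set (Fin 10 → F)) : Set (Fin 10 → F) :=
  { x | ∀ c ∈ C, traceIP x c = 0 }

/-- The dual of a binary code of length 40 under the standard inner product. -/
def binDual (S : Set (Fin 40 → ZMod 2)) : Set (Fin 40 → ZMod 2) :=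
  { x | ∀ c ∈ S, ∑ i, x i * c i = 0 }

/-- The dual of a quaternary code under the Hermitian inner product ⟨x,y⟩ = Σ xᵢ ȳᵢ. -/
def hermDual (S : Set (Fin 10 → F)) : Set (Fin 10 → F) :=
  { x | ∀ c ∈ S, ∑ i, x i * (c i) ^ 2 = 0 }

/-- The Hermitian self-dual [10,5,4] code E₁₀ over GF(4). -/
def E10 (ω : F) : Submodule F (Fin 10 → F) :=
  Submodule.span F {![1,1,1,1,0,0,0,0,0,0], ![0,0,1,1,1,1,0,0,0,0],
    ![0,0,0,0,1,1,1,1,0,0], ![0,0,0,0,0,0,1,1,1,1],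
    ![1,0,1,0,1,0,1,0,ω,ω^2]}

/-- The Hermitian self-dual [10,5,4] code B₁₀ over GF(4). -/
def B10 (ω : F) : Submodule F (Fin 10 → F) :=
  Submodule.span F {![1,1,1,1,0,0,0,0,0,0], ![0,1,ω,ω^2,1,0,0,0,0,0],
    ![0,0,0,0,0,1,1,1,1,0], ![0,0,0,0,0,0,1,ω,ω^2,1],
    ![0,1,ω^2,ω,0,0,1,ω^2,ω,0]}

/-- Interpret a bit as an element of GF(4). -/
def b2f (x : ZMod 2) : F := if x = 1 then 1 else 0

/-- The projection 𝔽₂⁴⁰ → GF(4)¹⁰ : column j ↦ v₂ᵢₙ·1 + v·ω + v·ϖ with row labels 0,1,ω,ϖ. -/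
def Proj (ω : F) (v : Fin 40 → ZMod 2) : Fin 10 → F := fun j =>
  b2f (v (idx j 1)) * 1 + b2f (v (idx j 2)) * ω + b2f (v (idx j 3)) * ω ^ 2

/-- The parity of column j (1 = odd number of ones). -/
def colPar (v : Fin 40 → ZMod 2) (j : Fin 10) : ZMod 2 := ∑ k, v (idx j k)

/-- The parity of the top row (1 = odd number of ones). -/
def topPar (v : Fin 40 → ZMod 2) : ZMod 2 := ∑ j, v (idx j 0)

/-- The coordinate permutation of Fin 10 permuting the five blocks {2m, 2m+1}
as units according to π, preserving order within blocks. -/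
def blockPerm (π : Equiv.Perm (Fin 5)) : Fin 10 → Fin 10 := fun t =>
  ⟨2 * (π ⟨t.val / 2, by have := t.isLt; omega⟩).val + t.val % 2, by
    have := (π ⟨t.val / 2, by have := t.isLt; omega⟩).isLt; have := t.isLt; omega⟩

/-- The coordinate permutation of Fin 10 interchanging the two coordinates within
each block belonging to S, fixing all other coordinates. -/
def blockSwap (S : Finset (Fin 5)) : Fin 10 → Fin 10 := fun t =>
  if (⟨t.val / 2, by have := t.isLt; omega⟩ : Fin 5) ∈ S then
    ⟨2 * (t.val / 2) + (1 - t.val % 2), by have := t.isLt; omega⟩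
  else t

end Defs

/-!
Each of `Proj`, the column parities and the top-row parity is additive. On `Ĉ` they read off
`c`, `0`, `0` (every `φ x` has top bit `0` and even weight, and `Proj (φ x) = x`); on `d₄¹⁰` they
vanish except that the top-row parity counts the full columns, whose number is even exactly when
`8` divides the weight; on `e_C` they give `0`, `1`, `0`. This proves the forward implication.

Conversely, every column `c ∈ 𝔽₂⁴` splits as `φ (Proj c) + (c₁ + c₂ + c₃)·1111 + par(c)·1000`,
so when all columns have the same parity `p`, `v - φ̂(Proj v) - p·e_C` is constant on columns, and
its top-row parity is that of `v` (ten copies of `p` cancel).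
-/

theorem zmod_two_eq_zero_or_one (x : ZMod 2) : x = 0 ∨ x = 1 := by
  revert x; decide

theorem hammingNorm_eq_sum_val {ι : Type*} [Fintype ι] (v : ι → ZMod 2) :
    hammingNorm v = ∑ i, (v i).val := by
  rw [hammingNorm, Finset.card_filter]
  refine Finset.sum_congr rfl fun i _ => ?_
  rcases zmod_two_eq_zero_or_one (v i) with h | h <;> rw [h] <;> decide

section GF4

variable {F : Type*} [Field F] {ω : F}

theorem charP_two_of_card_eq_four [Fintype F] (hF : Fintype.card F = 4) : CharP F 2 := by
  have h4 : ((Fintype.card F : ℕ) : F) = 0 := FiniteField.cast_card_eq_zero F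
  rw [hF] at h4
  have h2 : (2 : F) * 2 = 0 := by rw [← h4]; norm_num
  exact CharTwo.of_one_ne_zero_of_two_eq_zero one_ne_zero (mul_self_eq_zero.mp h2)

theorem ne_zero_of_sq_eq_add_one (hω : ω ^ 2 = ω + 1) : ω ≠ 0 := by
  rintro rfl; norm_num at hω

theorem one_add_self_of_sq_eq_add_one (hω : ω ^ 2 = ω + 1) : 1 + ω = ω ^ 2 := by
  rw [hω, add_comm]

variable [CharP F 2] (hω : ω ^ 2 = ω + 1)
include hω

theorem one_add_sq_of_sq_eq_add_one : 1 + ω ^ 2 = ω := by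
  linear_combination hω + CharTwo.two_eq_zero (R := F)

theorem self_add_sq_of_sq_eq_add_one : ω + ω ^ 2 = 1 := by
  linear_combination hω + ω * CharTwo.two_eq_zero (R := F)

theorem one_add_self_add_sq_of_sq_eq_add_one : 1 + ω + ω ^ 2 = 0 := by
  linear_combination hω + (1 + ω) * CharTwo.two_eq_zero (R := F)

theorem ne_one_of_sq_eq_add_one : ω ≠ 1 := by
  rintro rfl
  rw [one_pow, CharTwo.add_self_eq_zero] at hω
  exact one_ne_zero hω

theorem injective_zero_one_self_sq : Function.Injective ![0, 1, ω, ω ^ 2] := by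
  have h0 := ne_zero_of_sq_eq_add_one hω
  have h1 := ne_one_of_sq_eq_add_one hω
  have h2 : ω ^ 2 ≠ 0 := pow_ne_zero 2 h0
  have h3 : ω ^ 2 ≠ 1 := by rw [hω]; intro h; exact h0 (by linear_combination h)
  have h4 : ω ^ 2 ≠ ω := by rw [hω]; simp
  intro i j h
  fin_cases i <;> fin_cases j <;> simp_all [eq_comm]

theorem eq_zero_or_one_or_self_or_sq [Fintype F] (hF : Fintype.card F = 4) (x : F) :
    x = 0 ∨ x = 1 ∨ x = ω ∨ x = ω ^ 2 := by
  obtain ⟨i, rfl⟩ := ((Fintype.bijective_iff_injective_and_card _).mpr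
    ⟨injective_zero_one_self_sq hω, by simp [hF]⟩).surjective x
  fin_cases i <;> simp

end GF4

section Column

variable {F : Type} [Field F] {ω : F}

def projCol (ω : F) (c : Fin 4 → ZMod 2) : F :=
  b2f (c 1) * 1 + b2f (c 2) * ω + b2f (c 3) * ω ^ 2

@[simp] theorem b2f_zero : (b2f 0 : F) = 0 := by simp [b2f]

@[simp] theorem b2f_one : (b2f 1 : F) = 1 := by simp [b2f]

theorem b2f_add [CharP F 2] (x y : ZMod 2) : (b2f (x + y) : F) = b2f x + b2f y := by
  rcases zmod_two_eq_zero_or_one x with rfl | rfl <;>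
    rcases zmod_two_eq_zero_or_one y with rfl | rfl <;>
    simp [CharTwo.add_self_eq_zero]

theorem projCol_add [CharP F 2] (c d : Fin 4 → ZMod 2) :
    projCol ω (c + d) = projCol ω c + projCol ω d := by
  simp only [projCol, Pi.add_apply, b2f_add]; ring

theorem projCol_const [CharP F 2] (hω : ω ^ 2 = ω + 1) (t : ZMod 2) :
    projCol ω (fun _ => t) = 0 := by
  simp only [projCol]
  linear_combination b2f t * one_add_self_add_sq_of_sq_eq_add_one hω

variable [DecidableEq F]

theorem phi_apply_zero (x : F) : phi ω x 0 = 0 := by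
  unfold phi; split_ifs <;> rfl

theorem sum_phi (x : F) : ∑ k, phi ω x k = 0 := by
  unfold phi; split_ifs <;> decide

@[simp] theorem phi_zero : phi ω 0 = ![0, 0, 0, 0] := by simp [phi]

@[simp] theorem phi_one : phi ω 1 = ![0, 0, 1, 1] := by simp [phi]

variable [CharP F 2] (hω : ω ^ 2 = ω + 1)
include hω

theorem phi_self : phi ω ω = ![0, 1, 0, 1] := by
  rw [phi, if_neg (ne_zero_of_sq_eq_add_one hω), if_neg (ne_one_of_sq_eq_add_one hω), if_pos rfl]

theorem phi_sq : phi ω (ω ^ 2) = ![0, 1, 1, 0] := by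
  have h := injective_zero_one_self_sq hω
  have h0 : ω ^ 2 ≠ 0 := h.ne (by decide : (3 : Fin 4) ≠ 0)
  have h1 : ω ^ 2 ≠ 1 := h.ne (by decide : (3 : Fin 4) ≠ 1)
  have h2 : ω ^ 2 ≠ ω := h.ne (by decide : (3 : Fin 4) ≠ 2)
  rw [phi, if_neg h0, if_neg h1, if_neg h2]

theorem projCol_phi [Fintype F] (hF : Fintype.card F = 4) (x : F) :
    projCol ω (phi ω x) = x := by
  rcases eq_zero_or_one_or_self_or_sq hω hF x with rfl | rfl | rfl | rfl
  · simp [projCol]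
  · simp [projCol, self_add_sq_of_sq_eq_add_one hω]
  · simp [projCol, phi_self hω, one_add_sq_of_sq_eq_add_one hω]
  · simp [projCol, phi_sq hω, one_add_self_of_sq_eq_add_one hω]

theorem sub_phi_projCol_sub_smul (c : Fin 4 → ZMod 2) :
    c - phi ω (projCol ω c) - (∑ k, c k) • ![1, 0, 0, 0] = fun _ => c 1 + c 2 + c 3 := by
  obtain ⟨x0, x1, x2, x3, rfl⟩ : ∃ x0 x1 x2 x3, c = ![x0, x1, x2, x3] :=
    ⟨c 0, c 1, c 2, c 3, by ext k; fin_cases k <;> rfl⟩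
  rcases zmod_two_eq_zero_or_one x0 with rfl | rfl <;>
    rcases zmod_two_eq_zero_or_one x1 with rfl | rfl <;>
    rcases zmod_two_eq_zero_or_one x2 with rfl | rfl <;>
    rcases zmod_two_eq_zero_or_one x3 with rfl | rfl <;>
    simp [projCol, one_add_self_of_sq_eq_add_one hω, one_add_sq_of_sq_eq_add_one hω,
      self_add_sq_of_sq_eq_add_one hω, CharTwo.add_self_eq_zero, phi_self hω, phi_sq hω] <;>
    decide

end Column

section Array

def idxEquiv : Fin 10 × Fin 4 ≃ Fin 40 where
  toFun p := idx p.1 p.2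
  invFun i := (⟨i / 4, by omega⟩, ⟨i % 4, by omega⟩)
  left_inv := by
    rintro ⟨j, k⟩
    ext <;> simp [idx]; omega
  right_inv i := by
    ext; simp [idx]; omega

def col (v : Fin 40 → ZMod 2) (j : Fin 10) : Fin 4 → ZMod 2 := fun k => v (idx j k)

def ofCols (f : Fin 10 → Fin 4 → ZMod 2) : Fin 40 → ZMod 2 :=
  fun i => f (idxEquiv.symm i).1 (idxEquiv.symm i).2

theorem ofCols_idx (f : Fin 10 → Fin 4 → ZMod 2) (j : Fin 10) (k : Fin 4) :
    ofCols f (idx j k) = f j k := by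
  simp only [ofCols, show idx j k = idxEquiv (j, k) from rfl, Equiv.symm_apply_apply]

theorem sum_fin_forty {M : Type*} [AddCommMonoid M] (f : Fin 40 → M) :
    ∑ i, f i = ∑ j, ∑ k, f (idx j k) := by
  rw [← Fintype.sum_prod_type', ← idxEquiv.sum_comp]; rfl

theorem col_eq_const_of_mem_d4ten {b : Fin 40 → ZMod 2} (hb : b ∈ d4ten) (j : Fin 10) :
    col b j = fun _ => b (idx j 0) :=
  funext fun k => hb j k 0

theorem mem_d4ten_of_col_eq_const {b : Fin 40 → ZMod 2} (t : Fin 10 → ZMod 2)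
    (hb : ∀ j, col b j = fun _ => t j) : b ∈ d4ten :=
  fun j k k' => (congrFun (hb j) k).trans (congrFun (hb j) k').symm

theorem eight_dvd_hammingNorm_iff {b : Fin 40 → ZMod 2} (hb : b ∈ d4ten) :
    8 ∣ hammingNorm b ↔ topPar b = 0 := by
  have hnorm : hammingNorm b = 4 * ∑ j, (b (idx j 0)).val := by
    simp only [hammingNorm_eq_sum_val, sum_fin_forty, Finset.mul_sum]
    refine Finset.sum_congr rfl fun j _ => ?_
    change ∑ k, (col b j k).val = _
    simp [col_eq_const_of_mem_d4ten hb j]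
  have hcast : ((∑ j, (b (idx j 0)).val : ℕ) : ZMod 2) = topPar b := by
    simp [topPar]
  rw [hnorm, ← hcast, ZMod.natCast_eq_zero_iff]
  omega

end Array

section Parities

theorem colPar_add (v w : Fin 40 → ZMod 2) (j : Fin 10) :
    colPar (v + w) j = colPar v j + colPar w j :=
  Finset.sum_add_distrib

theorem topPar_add (v w : Fin 40 → ZMod 2) : topPar (v + w) = topPar v + topPar w :=
  Finset.sum_add_distrib

theorem topPar_sub (v w : Fin 40 → ZMod 2) : topPar (v - w) = topPar v - topPar w :=
  Finset.sum_sub_distrib ..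

theorem topPar_smul (t : ZMod 2) (v : Fin 40 → ZMod 2) : topPar (t • v) = t * topPar v :=
  (Finset.mul_sum ..).symm

theorem col_eCvec (j : Fin 10) : col eCvec j = ![1, 0, 0, 0] := by
  ext k; fin_cases k <;> simp [col, eCvec, idx]

theorem colPar_eCvec (j : Fin 10) : colPar eCvec j = 1 := by
  change ∑ k, col eCvec j k = 1
  simp [col_eCvec]; decide

theorem topPar_eCvec : topPar eCvec = 0 := by
  decide

theorem colPar_of_mem_d4ten {b : Fin 40 → ZMod 2} (hb : b ∈ d4ten) (j : Fin 10) :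
    colPar b j = 0 := by
  change ∑ k, col b j k = 0
  rw [col_eq_const_of_mem_d4ten hb]
  simp only [Fin.sum_univ_four, CharTwo.add_self_eq_zero, zero_add]

end Parities

section Projection

variable {F : Type} [Field F] {ω : F}

theorem Proj_apply (v : Fin 40 → ZMod 2) (j : Fin 10) : Proj ω v j = projCol ω (col v j) := rfl

theorem Proj_add [CharP F 2] (v w : Fin 40 → ZMod 2) : Proj ω (v + w) = Proj ω v + Proj ω w :=
  funext fun j => projCol_add (col v j) (col w j)

theorem Proj_zero : Proj ω 0 = 0 := by
  ext j; simp [Proj]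

theorem Proj_eCvec : Proj ω eCvec = 0 := by
  ext j; simp [Proj_apply, col_eCvec, projCol]

theorem Proj_of_mem_d4ten [CharP F 2] (hω : ω ^ 2 = ω + 1) {b : Fin 40 → ZMod 2}
    (hb : b ∈ d4ten) : Proj ω b = 0 := by
  ext j
  rw [Proj_apply, col_eq_const_of_mem_d4ten hb, projCol_const hω, Pi.zero_apply]

variable [DecidableEq F] {C : Set (Fin 10 → F)} {a : Fin 40 → ZMod 2}

theorem col_eq_phi_of_forall {c : Fin 10 → F} (ha : ∀ j k, a (idx j k) = phi ω (c j) k)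
    (j : Fin 10) : col a j = phi ω (c j) :=
  funext (ha j)

theorem Proj_mem_of_mem_hatSet [CharP F 2] [Fintype F] (hF : Fintype.card F = 4)
    (hω : ω ^ 2 = ω + 1) (ha : a ∈ hatSet ω C) : Proj ω a ∈ C := by
  obtain ⟨c, hc, hac⟩ := ha
  convert hc using 1
  ext j
  rw [Proj_apply, col_eq_phi_of_forall hac, projCol_phi hω hF]

theorem colPar_of_mem_hatSet (ha : a ∈ hatSet ω C) (j : Fin 10) : colPar a j = 0 := by
  obtain ⟨c, -, hac⟩ := ha
  exact (congrArg (∑ k, · k) (col_eq_phi_of_forall hac j)).trans (sum_phi _)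

theorem topPar_of_mem_hatSet (ha : a ∈ hatSet ω C) : topPar a = 0 := by
  obtain ⟨c, -, hac⟩ := ha
  simp [topPar, hac, phi_apply_zero]

end Projection

section Main

variable {F : Type} [Field F] [DecidableEq F] [CharP F 2] {ω : F} {C : Set (Fin 10 → F)}
  {v : Fin 40 → ZMod 2}

theorem proj_mem_and_parities_of_mem_rhoC [Fintype F] (hF : Fintype.card F = 4)
    (hω : ω ^ 2 = ω + 1) (hv : v ∈ rhoC ω C) :
    Proj ω v ∈ C ∧ (∀ j j' : Fin 10, colPar v j = colPar v j') ∧ topPar v = 0 := by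
  obtain ⟨a, ha, b, ⟨hb, hb8⟩, e, he, rfl⟩ := hv
  have hProj_e : Proj ω e = 0 := by rcases he with rfl | rfl; exacts [Proj_zero, Proj_eCvec]
  refine ⟨?_, fun j j' => ?_, ?_⟩
  · rw [Proj_add, Proj_add, Proj_of_mem_d4ten hω hb, hProj_e, add_zero, add_zero]
    exact Proj_mem_of_mem_hatSet hF hω ha
  · simp only [colPar_add, colPar_of_mem_hatSet ha, colPar_of_mem_d4ten hb, zero_add]
    rcases he with rfl | rfl
    exacts [rfl, (colPar_eCvec j).trans (colPar_eCvec j').symm]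
  · rw [topPar_add, topPar_add, topPar_of_mem_hatSet ha, (eight_dvd_hammingNorm_iff hb).mp hb8]
    rcases he with rfl | rfl
    exacts [rfl, topPar_eCvec]

theorem mem_rhoC_of_proj_mem_of_parities (hω : ω ^ 2 = ω + 1) (hC : Proj ω v ∈ C)
    (hcol : ∀ j j' : Fin 10, colPar v j = colPar v j') (htop : topPar v = 0) :
    v ∈ rhoC ω C := by
  set p := colPar v 0
  set f := fun j => phi ω (Proj ω v j)
  set a := ofCols f
  have ha : a ∈ hatSet ω C := ⟨Proj ω v, hC, ofCols_idx _⟩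
  have hb : v - a - p • eCvec ∈ d4ten := by
    refine mem_d4ten_of_col_eq_const (fun j => col v j 1 + col v j 2 + col v j 3) fun j => ?_
    have hp : p = ∑ k, col v j k := hcol 0 j
    have hcol_a : col a j = phi ω (Proj ω v j) := funext (ofCols_idx f j)
    rw [← sub_phi_projCol_sub_smul hω, ← hp, ← col_eCvec j, ← Proj_apply, ← hcol_a]
    rfl
  refine ⟨a, ha, v - a - p • eCvec, ⟨hb, ?_⟩, p • eCvec, ?_, by abel⟩
  · rw [eight_dvd_hammingNorm_iff hb, topPar_sub, topPar_sub, htop, topPar_of_mem_hatSet ha,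
      topPar_smul, topPar_eCvec]
    simp
  · rcases zmod_two_eq_zero_or_one p with h | h <;> simp [h]

end Main

/-- For C = E₁₀ or B₁₀, v ∈ ρ_C(C) iff Proj(v) ∈ C, all ten column
parities agree, and the top-row parity is even. -/
theorem stmt_12 (F : Type) [Field F] [Fintype F] [DecidableEq F]
    (hF : Fintype.card F = 4) (ω : F) (hω : ω ^ 2 = ω + 1) :
    ∀ C ∈ ({(E10 ω : Set (Fin 10 → F)),
            (B10 ω : Set (Fin 10 → F))} : Set (Set (Fin 10 → F))),
      ∀ v : Fin 40 → ZMod 2,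
        v ∈ rhoC ω C ↔
          Proj ω v ∈ C ∧
          (∀ j j' : Fin 10, colPar v j = colPar v j') ∧
          topPar v = 0 := by
  have := charP_two_of_card_eq_four hF
  intro C _ v
  exact ⟨proj_mem_and_parities_of_mem_rhoC hF hω,
    fun ⟨hC, hcol, htop⟩ => mem_rhoC_of_proj_mem_of_parities hω hC hcol htop⟩
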